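/- Let q be a rational number with 0 < q < 1 such that q⁻¹ is not an integer, and let M be the submonoid of (ℚ, +) generated by {qⁿ : n ∈ ℕ₀}. Then M is atomic with set of atoms exactly {qⁿ : n ∈ ℕ₀}, and M does not satisfy the ACCP: writing q = a/b with a, b coprime positive integers, (a qⁿ + M)_{n≥1} is an ascending chain of principal ideals of M that does not stabilize. -/

import Mathlib

/-- A subset `S` of an abelian group is a submonoid if it contains `0`
and is closed under addition. -/
def IsSubmonoidSet {G : Type*} [AddCommGroup G] (S : Set G) : Prop :=
  (0 : G) ∈ S ∧ ∀ a ∈ S, ∀ b ∈ S, a + b ∈ S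

/-- `a` is an atom of the (sub)monoid `S`: it belongs to `S`, is not invertible in `S`,
and whenever `a = b + c` with `b, c ∈ S`, one of `b`, `c` is invertible in `S`. -/
def IsAtomIn {G : Type*} [AddCommGroup G] (S : Set G) (a : G) : Prop :=
  a ∈ S ∧ -a ∉ S ∧ ∀ b ∈ S, ∀ c ∈ S, a = b + c → (-b ∈ S ∨ -c ∈ S)

/-- `S` is atomic: every non-invertible element of `S` is a finite sum of atoms of `S`. -/
def IsAtomicSet {G : Type*} [AddCommGroup G] (S : Set G) : Prop :=
  ∀ a ∈ S, -a ∉ S → ∃ l : Multiset G, (∀ x ∈ l, IsAtomIn S x) ∧ l.sum = a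

/-- The principal ideal `b + S` of the (sub)monoid `S`. -/
def setIdeal {G : Type*} [AddCommGroup G] (S : Set G) (b : G) : Set G :=
  {x | ∃ m ∈ S, x = b + m}

/-- `S` satisfies the ACCP: every ascending chain of principal ideals of `S` stabilizes. -/
def SatisfiesACCPSet {G : Type*} [AddCommGroup G] (S : Set G) : Prop :=
  ∀ b : ℕ → G, (∀ n, b n ∈ S) →
    (∀ n, setIdeal S (b n) ⊆ setIdeal S (b (n + 1))) →
    ∃ N, ∀ n, N ≤ n → setIdeal S (b n) = setIdeal S (b N)

/-- The submonoid of `(ℚ, +)` generated by the powers `{qⁿ : n ∈ ℕ₀}`. -/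
def powMonoid (q : ℚ) : Set ℚ := ↑(AddSubmonoid.closure {x : ℚ | ∃ n : ℕ, x = q ^ n})

/-! Every element of `M` has denominator dividing a power of `b`, whereas `q⁻¹ = b/a` does not
(`a ≥ 2` as `q⁻¹ ∉ ℤ`, and `a` is coprime to `b`); so `q⁻¹ ∉ M`. As `M ⊆ ℚ≥0` and `0 < q < 1`, a
sum of generators smaller than `qⁿ` only involves powers `qᵏ` with `k > n`, i.e. lies in
`qⁿ⁺¹ M`. So if `qⁿ = x + y` with `x, y ∈ M` nonzero, then `q⁻¹ = (x + y) / qⁿ⁺¹ ∈ M`: the `qⁿ`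
are atoms, and being the generators they are all the atoms. Finally `b qⁿ⁺¹ = a qⁿ` gives
`a qⁿ - a qⁿ⁺¹ = (b - a) qⁿ⁺¹ ∈ M`, so the ideals `a qⁿ + M` increase, strictly as
`a qⁿ⁺¹ < a qⁿ`. -/

section setIdeal

variable {G : Type*} [AddCommGroup G]

lemma setIdeal_subset_setIdeal_iff (S : AddSubmonoid G) (x y : G) :
    setIdeal S x ⊆ setIdeal S y ↔ x - y ∈ S := by
  constructor
  · intro h
    obtain ⟨m, hm, hxm⟩ := h ⟨0, S.zero_mem, (add_zero x).symm⟩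
    rwa [hxm, add_sub_cancel_left]
  · rintro h _ ⟨m, hm, rfl⟩
    exact ⟨x - y + m, S.add_mem h hm, by abel⟩

lemma not_satisfiesACCPSet_of_ssubset {S : Set G} (c : ℕ → G) (hc : ∀ n, c n ∈ S)
    (hchain : ∀ n, setIdeal S (c n) ⊂ setIdeal S (c (n + 1))) : ¬ SatisfiesACCPSet S := by
  intro hACCP
  obtain ⟨N, hN⟩ := hACCP c hc fun n => (hchain n).subset
  exact (hchain N).ne (hN (N + 1) N.le_succ).symm

end setIdeal

namespace powMonoid

variable {q x : ℚ}

lemma pow_mem (q : ℚ) (n : ℕ) : q ^ n ∈ powMonoid q :=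
  AddSubmonoid.subset_closure ⟨n, rfl⟩

lemma zero_mem (q : ℚ) : (0 : ℚ) ∈ powMonoid q :=
  AddSubmonoid.zero_mem _

lemma add_mem {y : ℚ} (hx : x ∈ powMonoid q) (hy : y ∈ powMonoid q) : x + y ∈ powMonoid q :=
  AddSubmonoid.add_mem _ hx hy

lemma natCast_mul_pow_mem (q : ℚ) (k n : ℕ) : (k : ℚ) * q ^ n ∈ powMonoid q := by
  rw [← nsmul_eq_mul]
  exact AddSubmonoid.nsmul_mem _ (pow_mem q n) k

lemma nonneg (h0 : 0 < q) (hx : x ∈ powMonoid q) : 0 ≤ x := by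
  induction hx using AddSubmonoid.closure_induction with
  | mem y hy => obtain ⟨n, rfl⟩ := hy; positivity
  | zero => exact le_rfl
  | add y z _ _ hy hz => exact add_nonneg hy hz

lemma neg_mem_iff (h0 : 0 < q) (hx : x ∈ powMonoid q) : -x ∈ powMonoid q ↔ x = 0 := by
  refine ⟨fun hneg => ?_, fun h => by simpa [h] using zero_mem q⟩
  linarith [nonneg h0 hx, nonneg h0 hneg]

lemma exists_eq_pow_succ_mul_of_lt_pow (h0 : 0 < q) (h1 : q < 1) (hx : x ∈ powMonoid q)
    {n : ℕ} (hlt : x < q ^ n) : ∃ m ∈ powMonoid q, x = q ^ (n + 1) * m := by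
  induction hx using AddSubmonoid.closure_induction generalizing n with
  | mem y hy =>
    obtain ⟨k, rfl⟩ := hy
    have hnk : n + 1 ≤ k := (pow_lt_pow_iff_right_of_lt_one₀ h0 h1).mp hlt
    exact ⟨q ^ (k - (n + 1)), pow_mem q _, by rw [← pow_add, Nat.add_sub_cancel' hnk]⟩
  | zero => exact ⟨0, zero_mem q, (mul_zero _).symm⟩
  | add y z hy hz ihy ihz =>
    obtain ⟨my, hmy, rfl⟩ := ihy (by linarith [nonneg h0 hz])
    obtain ⟨mz, hmz, rfl⟩ := ihz (by linarith [nonneg h0 hy])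
    exact ⟨my + mz, add_mem hmy hmz, (mul_add _ _ _).symm⟩

lemma exists_mul_pow_eq_intCast {a b : ℕ} (hb : 0 < b) (hq : q = a / b)
    (hx : x ∈ powMonoid q) : ∃ N : ℕ, ∃ z : ℤ, x * b ^ N = z := by
  induction hx using AddSubmonoid.closure_induction with
  | mem y hy =>
    obtain ⟨n, rfl⟩ := hy
    refine ⟨n, a ^ n, ?_⟩
    rw [hq, ← mul_pow, div_mul_cancel₀ _ (by positivity)]
    norm_cast
  | zero => exact ⟨0, 0, by simp⟩
  | add y z _ _ hy hz =>
    obtain ⟨N, u, hu⟩ := hy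
    obtain ⟨K, v, hv⟩ := hz
    refine ⟨N + K, u * b ^ K + v * b ^ N, ?_⟩
    push_cast
    rw [← hu, ← hv]
    ring

lemma inv_notMem {a b : ℕ} (ha : 1 < a) (hb : 0 < b) (hab : a.Coprime b) (hq : q = a / b) :
    q⁻¹ ∉ powMonoid q := by
  intro hmem
  obtain ⟨N, z, hz⟩ := exists_mul_pow_eq_intCast hb hq hmem
  have hbz : ((b ^ (N + 1) : ℕ) : ℤ) = a * z := by
    have : ((b : ℚ) ^ (N + 1)) = a * z := by
      rw [← hz, hq, inv_div]
      field_simp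
      ring
    exact_mod_cast this
  have hdvd : a ∣ b ^ (N + 1) := Int.natCast_dvd_natCast.mp ⟨z, hbz⟩
  exact ha.ne' ((hab.pow_right (N + 1)).eq_one_of_dvd hdvd)

lemma eq_zero_or_eq_zero_of_pow_eq_add (h0 : 0 < q) (h1 : q < 1) (hinv : q⁻¹ ∉ powMonoid q) {n : ℕ} {x y : ℚ}
    (hx : x ∈ powMonoid q) (hy : y ∈ powMonoid q) (hxy : q ^ n = x + y) : x = 0 ∨ y = 0 := by
  by_contra! hne
  have hxpos := (nonneg h0 hx).lt_of_ne' hne.1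
  have hypos := (nonneg h0 hy).lt_of_ne' hne.2
  obtain ⟨mx, hmx, rfl⟩ := exists_eq_pow_succ_mul_of_lt_pow h0 h1 hx (n := n) (by linarith)
  obtain ⟨my, hmy, rfl⟩ := exists_eq_pow_succ_mul_of_lt_pow h0 h1 hy (n := n) (by linarith)
  have hsum : q * (mx + my) = 1 :=
    mul_left_cancel₀ (pow_ne_zero n h0.ne') (by linear_combination -hxy)
  exact hinv (eq_inv_of_mul_eq_one_right hsum ▸ add_mem hmx hmy)

lemma isAtomIn_pow (h0 : 0 < q) (h1 : q < 1) (hinv : q⁻¹ ∉ powMonoid q) (n : ℕ) :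
    IsAtomIn (powMonoid q) (q ^ n) := by
  refine ⟨pow_mem q n, fun hneg => ?_, fun x hx y hy hxy => ?_⟩
  · exact pow_ne_zero n h0.ne' ((neg_mem_iff h0 (pow_mem q n)).mp hneg)
  · rw [neg_mem_iff h0 hx, neg_mem_iff h0 hy]
    exact eq_zero_or_eq_zero_of_pow_eq_add h0 h1 hinv hx hy hxy

lemma exists_eq_pow_of_isAtomIn (h0 : 0 < q) (hx : IsAtomIn (powMonoid q) x) :
    ∃ n : ℕ, x = q ^ n := by
  obtain ⟨hmem, hninv, hsplit⟩ := hx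
  obtain ⟨l, hl, rfl⟩ := AddSubmonoid.exists_multiset_of_mem_closure hmem
  have hl0 : l ≠ 0 := by
    rintro rfl
    exact hninv (by simpa using zero_mem q)
  obtain ⟨y, hyl⟩ := Multiset.exists_mem_of_ne_zero hl0
  obtain ⟨t, rfl⟩ := Multiset.exists_cons_of_mem hyl
  obtain ⟨n, rfl⟩ := hl y hyl
  have ht : t.sum ∈ powMonoid q := AddSubmonoid.multiset_sum_mem _ _
    fun z hz => AddSubmonoid.subset_closure (hl z (Multiset.mem_cons_of_mem hz))
  rw [Multiset.sum_cons] at hsplit ⊢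
  rcases hsplit _ (pow_mem q n) _ ht rfl with hneg | hneg
  · exact absurd ((neg_mem_iff h0 (pow_mem q n)).mp hneg) (pow_ne_zero n h0.ne')
  · exact ⟨n, by rw [(neg_mem_iff h0 ht).mp hneg, add_zero]⟩

lemma isAtomIn_iff (h0 : 0 < q) (h1 : q < 1) (hinv : q⁻¹ ∉ powMonoid q) :
    IsAtomIn (powMonoid q) x ↔ ∃ n : ℕ, x = q ^ n :=
  ⟨exists_eq_pow_of_isAtomIn h0, by rintro ⟨n, rfl⟩; exact isAtomIn_pow h0 h1 hinv n⟩

lemma isAtomicSet (h0 : 0 < q) (h1 : q < 1) (hinv : q⁻¹ ∉ powMonoid q) :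
    IsAtomicSet (powMonoid q) := by
  intro x hx _
  obtain ⟨l, hl, rfl⟩ := AddSubmonoid.exists_multiset_of_mem_closure hx
  refine ⟨l, fun y hy => ?_, rfl⟩
  obtain ⟨n, rfl⟩ := hl y hy
  exact isAtomIn_pow h0 h1 hinv n

lemma setIdeal_natCast_mul_pow_ssubset {a b : ℕ} (h0 : 0 < q) (h1 : q < 1) (ha : 0 < a)
    (hb : 0 < b) (hq : q = a / b) (n : ℕ) :
    setIdeal (powMonoid q) (a * q ^ n) ⊂ setIdeal (powMonoid q) (a * q ^ (n + 1)) := by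
  have hab : a < b := by
    rw [hq, div_lt_one (by positivity)] at h1
    exact_mod_cast h1
  have hdiff : a * q ^ n - a * q ^ (n + 1) = ((b - a : ℕ) : ℚ) * q ^ (n + 1) := by
    rw [Nat.cast_sub hab.le, pow_succ, hq]
    field_simp
  have hlt : (a : ℚ) * q ^ (n + 1) < a * q ^ n := by
    have : 0 < (a : ℚ) := by exact_mod_cast ha
    exact mul_lt_mul_of_pos_left (pow_lt_pow_right_of_lt_one₀ h0 h1 n.lt_succ_self) this
  refine Set.ssubset_def.mpr ⟨(setIdeal_subset_setIdeal_iff _ _ _).mpr ?_, fun h => ?_⟩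
  · rw [hdiff]
    exact natCast_mul_pow_mem q _ _
  · linarith [nonneg h0 ((setIdeal_subset_setIdeal_iff _ _ _).mp h)]

end powMonoid

/-- For a rational `0 < q < 1` with `q⁻¹` not an integer, the monoid
generated by `{qⁿ : n ∈ ℕ₀}` is atomic with atoms exactly `{qⁿ : n ∈ ℕ₀}`, and it does not
satisfy the ACCP: writing `q = a/b` with `a, b` coprime positive integers,
`(a qⁿ + M)_{n ≥ 1}` is an ascending chain of principal ideals that does not stabilize. -/
theorem powMonoid_atomic_not_ACCP (q : ℚ) (h0 : 0 < q) (h1 : q < 1)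
    (hinv : ¬ ∃ k : ℤ, q⁻¹ = (k : ℚ)) (a b : ℕ) (ha : 0 < a) (hb : 0 < b)
    (hab : Nat.Coprime a b) (hq : q = (a : ℚ) / (b : ℚ)) :
    IsAtomicSet (powMonoid q) ∧
    {x : ℚ | IsAtomIn (powMonoid q) x} = {x : ℚ | ∃ n : ℕ, x = q ^ n} ∧
    (∀ n : ℕ, 1 ≤ n → (a : ℚ) * q ^ n ∈ powMonoid q ∧
      setIdeal (powMonoid q) ((a : ℚ) * q ^ n) ⊂
        setIdeal (powMonoid q) ((a : ℚ) * q ^ (n + 1))) ∧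
    ¬ SatisfiesACCPSet (powMonoid q) := by
  have ha1 : 1 < a := by
    refine lt_of_le_of_ne ha fun h => hinv ⟨b, ?_⟩
    rw [hq, ← h]
    simp
  have hinvM := powMonoid.inv_notMem ha1 hb hab hq
  have hmem := powMonoid.natCast_mul_pow_mem q a
  have hchain := powMonoid.setIdeal_natCast_mul_pow_ssubset h0 h1 ha hb hq
  exact ⟨powMonoid.isAtomicSet h0 h1 hinvM, Set.ext fun _ => powMonoid.isAtomIn_iff h0 h1 hinvM,
    fun n _ => ⟨hmem n, hchain n⟩, not_satisfiesACCPSet_of_ssubset _ hmem hchain⟩
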